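/- (Corollary 2) Let β̄ > 0 and M ≥ 1 and define h(λ, M) = ∏_{k=0}^{M−1}(1 − (M+1)λ/(β̄(k+1))). Then: (a) for every i ∈ {0, …, M} and every λ in [β̄ i/(M+1), β̄(i+1)/(M+1)] with λ ≠ 0 and λ ≠ β̄, one has |h(λ, M)| ≤ i!(M−i)!/M!; hence |h(λ, M)| < 1 for all λ ∈ (0, β̄); and (b) for every λ ∈ [β̄/(M+1), Mβ̄/(M+1)], |h(λ, M)| ≤ 1/M. Consequently, for any N×N real symmetric positive semidefinite matrix L whose kernel is spanned by the all-ones vector and whose nonzero eigenvalues lie in (0, β̄), the M-periodic gains ε(k+jM) = (M+1)/(β̄(k+1)) yield asymptotic average consensus, and if all nonzero eigenvalues lie in [β̄/(M+1), Mβ̄/(M+1)] then the per-period convergence rate satisfies ρ_M ≤ 1/M. -/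

import Mathlib

open Matrix Finset Filter

/-- The product `∏_{k=0}^{T-1} (I - ε(k) L)`, built recursively as
`P 0 = I`, `P (T+1) = (I - ε(T) L) * P T`. -/
noncomputable def consProd {N : ℕ} (L : Matrix (Fin N) (Fin N) ℝ) (ε : ℕ → ℝ) :
    ℕ → Matrix (Fin N) (Fin N) ℝ
  | 0 => 1
  | T + 1 => (1 - ε T • L) * consProd L ε T

/-!
Put `t = (M + 1) λ / β̄`, so that `h = ∏_{k<M} (k + 1 - t) / M!`. For `t ∈ [i, i + 1]` the factors
with `k < i` have absolute value at most `i - k` and the others at most `k + 1 - i`, whence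
`|h| ≤ i! (M - i)! / M! = 1 / C(M, i)`, which is at most `1 / M` when `1 ≤ i ≤ M - 1`. With the
symmetry `|h(M + 1 - t)| = |h(t)|` and the elementary range `0 < t < 2` this gives `|h| < 1` on
`(0, M + 1)`.

In an orthonormal eigenbasis of `L` the consensus product is `∑ᵢ (∏ₖ (1 - ε(k) λᵢ)) vᵢ vᵢᵀ`. Over
each period a mode with `λᵢ ≠ 0` is multiplied by `h(λᵢ, M)`, so it decays geometrically, while
the kernel mode `𝟙 / √N` is kept, leaving `𝟙 𝟙ᵀ / N`.
-/

open scoped Nat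

lemma prod_range_natCast_sub (n : ℕ) : ∏ k ∈ range n, ((n : ℝ) - k) = n ! := by
  rw [← Nat.descFactorial_self, Nat.descFactorial_eq_prod_range, Nat.cast_prod]
  exact prod_congr rfl fun k hk => (Nat.cast_sub (mem_range.1 hk).le).symm

lemma prod_range_natCast_add_one (n : ℕ) : ∏ k ∈ range n, ((k : ℝ) + 1) = n ! := by
  rw [Nat.factorial_eq_prod_range_add_one]
  push_cast
  rfl

lemma Nat.le_choose_of_pos_of_lt {n k : ℕ} (hk₀ : 0 < k) (hkn : k < n) : n ≤ n.choose k := by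
  induction n generalizing k with
  | zero => omega
  | succ m ih =>
    obtain ⟨j, rfl⟩ : ∃ j, k = j + 1 := ⟨k - 1, by omega⟩
    rw [Nat.choose_succ_succ']
    rcases Nat.eq_zero_or_pos j with rfl | hj
    · simp [Nat.add_comm]
    have h₁ := Nat.choose_pos (show j ≤ m by omega)
    have h₂ := Nat.choose_pos (show j + 1 ≤ m by omega)
    rcases (show j + 1 < m ∨ j + 1 = m by omega) with hlt | heq
    · have := ih (k := j + 1) (by omega) hlt
      omega
    · have := ih hj (by omega)
      omega

/-- The filter `h(λ, M)` in the normalized variable `t = (M + 1) λ / β̄`. -/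
noncomputable def normalizedFilter (M : ℕ) (t : ℝ) : ℝ :=
  ∏ k ∈ range M, (1 - t / (k + 1))

lemma normalizedFilter_eq_prod_div (M : ℕ) (t : ℝ) :
    normalizedFilter M t = (∏ k ∈ range M, ((k : ℝ) + 1 - t)) / M ! := by
  rw [← prod_range_natCast_add_one, ← prod_div_distrib]
  refine prod_congr rfl fun k _ => ?_
  field_simp

lemma prod_range_abs_sub_le {i j : ℕ} {t : ℝ} (hit : (i : ℝ) ≤ t) (hti : t ≤ i + 1) :
    ∏ k ∈ range (i + j), |(k : ℝ) + 1 - t| ≤ i ! * j ! := by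
  rw [prod_range_add, ← prod_range_natCast_sub i, ← prod_range_natCast_add_one j]
  refine mul_le_mul (prod_le_prod (fun _ _ => abs_nonneg _) fun k hk => ?_)
    (prod_le_prod (fun _ _ => abs_nonneg _) fun k _ => ?_)
    (prod_nonneg fun _ _ => abs_nonneg _) (prod_nonneg fun k hk => ?_)
  · have : (k : ℝ) + 1 ≤ i := by exact_mod_cast mem_range.1 hk
    rw [abs_le]; constructor <;> linarith
  · have : (0 : ℝ) ≤ k := k.cast_nonneg
    push_cast
    rw [abs_le]; constructor <;> linarith
  · have : (k : ℝ) + 1 ≤ i := by exact_mod_cast mem_range.1 hk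
    linarith

lemma abs_normalizedFilter_le {i M : ℕ} (hiM : i ≤ M) {t : ℝ} (hit : (i : ℝ) ≤ t)
    (hti : t ≤ i + 1) : |normalizedFilter M t| ≤ (i ! * (M - i)! : ℝ) / M ! := by
  obtain ⟨j, rfl⟩ := Nat.exists_eq_add_of_le hiM
  rw [normalizedFilter_eq_prod_div, abs_div, abs_prod, Nat.abs_cast, Nat.add_sub_cancel_left]
  exact div_le_div_of_nonneg_right (prod_range_abs_sub_le hit hti) (Nat.cast_nonneg _)

lemma abs_normalizedFilter_le_inv {M : ℕ} (hM : 1 ≤ M) {t : ℝ} (ht : t ∈ Set.Icc 1 (M : ℝ)) :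
    |normalizedFilter M t| ≤ 1 / M := by
  set i := min ⌊t⌋₊ (M - 1)
  have hfloor : 1 ≤ ⌊t⌋₊ := Nat.le_floor (by exact_mod_cast ht.1)
  have hiM : i < M := by omega
  have hit : (i : ℝ) ≤ t :=
    (Nat.cast_le.2 (min_le_left _ _)).trans (Nat.floor_le (by linarith [ht.1]))
  have hti : t ≤ i + 1 := by
    rcases le_total ⌊t⌋₊ (M - 1) with h | h
    · rw [show i = ⌊t⌋₊ from min_eq_left h]
      exact (Nat.lt_floor_add_one t).le
    · rw [show i = M - 1 from min_eq_right h, Nat.cast_sub hM, Nat.cast_one]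
      linarith [ht.2]
  have hchoose : M ≤ M.choose i := by
    rcases Nat.eq_zero_or_pos i with hi | hi
    · rw [hi, Nat.choose_zero_right]; omega
    · exact Nat.le_choose_of_pos_of_lt hi hiM
  calc |normalizedFilter M t| ≤ _ := abs_normalizedFilter_le hiM.le hit hti
    _ = 1 / M.choose i := by rw [Nat.cast_choose ℝ hiM.le, one_div_div]
    _ ≤ 1 / M := one_div_le_one_div_of_le (by exact_mod_cast hM) (by exact_mod_cast hchoose)

lemma abs_normalizedFilter_reflect (M : ℕ) (t : ℝ) :
    |normalizedFilter M (M + 1 - t)| = |normalizedFilter M t| := by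
  simp only [normalizedFilter_eq_prod_div, abs_div, abs_prod]
  congr 1
  rw [← prod_range_reflect]
  refine prod_congr rfl fun k hk => ?_
  have hk' := mem_range.1 hk
  rw [Nat.cast_sub (by omega), Nat.cast_sub (by omega), abs_sub_comm]
  ring_nf

lemma abs_normalizedFilter_lt_one_of_lt_two {M : ℕ} (hM : 1 ≤ M) {t : ℝ} (ht₀ : 0 < t)
    (ht₂ : t < 2) : |normalizedFilter M t| < 1 := by
  obtain ⟨m, rfl⟩ := Nat.exists_eq_add_of_le' hM
  rw [normalizedFilter, prod_range_succ', abs_mul, abs_prod]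
  have hrest : ∏ k ∈ range m, |1 - t / ((k + 1 : ℕ) + 1 : ℝ)| ≤ 1 := by
    refine prod_le_one (fun _ _ => abs_nonneg _) fun k _ => ?_
    have : t / ((k + 1 : ℕ) + 1 : ℝ) ≤ 2 := by
      rw [div_le_iff₀ (by positivity)]; push_cast; linarith [(k.cast_nonneg : (0 : ℝ) ≤ k)]
    rw [abs_le]; constructor <;> linarith [div_pos ht₀ (by positivity : (0 : ℝ) < (k + 1 : ℕ) + 1)]
  have hfirst : |1 - t / ((0 : ℕ) + 1 : ℝ)| < 1 := by
    rw [Nat.cast_zero, zero_add, div_one, abs_lt]; constructor <;> linarith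
  calc _ ≤ 1 * |1 - t / ((0 : ℕ) + 1 : ℝ)| := by gcongr
    _ < 1 := by rwa [one_mul]

lemma abs_normalizedFilter_lt_one {M : ℕ} (hM : 1 ≤ M) {t : ℝ} (ht : t ∈ Set.Ioo 0 ((M : ℝ) + 1)) :
    |normalizedFilter M t| < 1 := by
  rcases lt_or_ge t 2 with ht₂ | ht₂
  · exact abs_normalizedFilter_lt_one_of_lt_two hM ht.1 ht₂
  rcases le_or_gt t M with htM | htM
  · have hM₂ : (2 : ℝ) ≤ M := ht₂.trans htM
    calc _ ≤ 1 / (M : ℝ) := abs_normalizedFilter_le_inv hM ⟨by linarith, htM⟩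
      _ < 1 := by rw [div_lt_one] <;> linarith
  · rw [← abs_normalizedFilter_reflect]
    exact abs_normalizedFilter_lt_one_of_lt_two hM (by linarith [ht.2]) (by linarith)

lemma Function.Periodic.prod_range_mul_add {a : ℕ → ℝ} {M : ℕ} (ha : Function.Periodic a M)
    (q r : ℕ) : ∏ k ∈ range (q * M + r), a k = (∏ k ∈ range M, a k) ^ q * ∏ k ∈ range r, a k := by
  have hshift : ∀ q k, a (q * M + k) = a k := fun q k => by
    simpa [add_comm] using ha.nat_mul q k
  rw [prod_range_add]
  congr 1
  · induction q with
    | zero => simp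
    | succ q ih => simp only [add_mul, one_mul, prod_range_add, ih, pow_succ, hshift]
  · simp only [hshift]

lemma Function.Periodic.tendsto_prod_range_zero {a : ℕ → ℝ} {M : ℕ} (hM : 0 < M)
    (ha : Function.Periodic a M) (h : |∏ k ∈ range M, a k| < 1) :
    Tendsto (fun T => ∏ k ∈ range T, a k) atTop (nhds 0) := by
  set C := ∑ r ∈ range M, |∏ k ∈ range r, a k|
  have hbound : ∀ T, |∏ k ∈ range T, a k| ≤ C * |∏ k ∈ range M, a k| ^ (T / M) := fun T => by
    conv_lhs => rw [← Nat.div_add_mod' T M, ha.prod_range_mul_add]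
    rw [abs_mul, abs_pow, mul_comm]
    gcongr
    exact single_le_sum (f := fun r => |∏ k ∈ range r, a k|) (fun _ _ => abs_nonneg _)
      (mem_range.2 (Nat.mod_lt T hM))
  have hdiv : Tendsto (fun T : ℕ => T / M) atTop atTop :=
    Nat.tendsto_div_const_atTop hM.ne'
  have hgeo := ((tendsto_pow_atTop_nhds_zero_of_lt_one (abs_nonneg _) h).comp hdiv).const_mul C
  rw [mul_zero] at hgeo
  exact squeeze_zero_norm hbound hgeo

section Eigenbasis

variable {N : ℕ} {L : Matrix (Fin N) (Fin N) ℝ} {lam : Fin N → ℝ} {v : Fin N → Fin N → ℝ}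

lemma sum_vecMulVec_self_eq_one (horth : ∀ i j, v i ⬝ᵥ v j = if i = j then 1 else 0) :
    ∑ i, vecMulVec (v i) (v i) = 1 := by
  have hrows : Matrix.of v * (Matrix.of v)ᵀ = 1 := by
    ext i j
    simpa [mul_apply, one_apply, dotProduct] using horth i j
  have hcols : (Matrix.of v)ᵀ * Matrix.of v = 1 := mul_eq_one_comm.1 hrows
  ext j k
  simpa [mul_apply, Matrix.sum_apply, vecMulVec_apply] using congrFun₂ hcols j k

lemma consProd_eq_sum (heig : ∀ i, L *ᵥ v i = lam i • v i)
    (horth : ∀ i j, v i ⬝ᵥ v j = if i = j then 1 else 0) (ε : ℕ → ℝ) (T : ℕ) :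
    consProd L ε T = ∑ i, (∏ k ∈ range T, (1 - ε k * lam i)) • vecMulVec (v i) (v i) := by
  induction T with
  | zero => simp [consProd, sum_vecMulVec_self_eq_one horth]
  | succ T ih =>
    have hstep : ∀ i, (1 - ε T • L) * vecMulVec (v i) (v i) =
        (1 - ε T * lam i) • vecMulVec (v i) (v i) := fun i => by
      rw [sub_mul, one_mul, Matrix.smul_mul, mul_vecMulVec, heig, smul_vecMulVec, smul_smul,
        sub_smul, one_smul]
    rw [consProd, ih, mul_sum]
    refine sum_congr rfl fun i _ => ?_
    rw [Matrix.mul_smul, hstep, smul_smul, prod_range_succ, mul_comm]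

lemma tendsto_consProd (heig : ∀ i, L *ᵥ v i = lam i • v i)
    (horth : ∀ i j, v i ⬝ᵥ v j = if i = j then 1 else 0) {ε : ℕ → ℝ} {c : Fin N → ℝ}
    (hc : ∀ i, Tendsto (fun T => ∏ k ∈ range T, (1 - ε k * lam i)) atTop (nhds (c i))) :
    Tendsto (consProd L ε) atTop (nhds (∑ i, c i • vecMulVec (v i) (v i))) := by
  simp_rw [funext (consProd_eq_sum heig horth ε)]
  exact tendsto_finsetSum _ fun i _ => (hc i).smul_const _

lemma tendsto_consProd_average (heig : ∀ i, L *ᵥ v i = lam i • v i)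
    (horth : ∀ i j, v i ⬝ᵥ v j = if i = j then 1 else 0) {ε : ℕ → ℝ} {i₀ : Fin N}
    (hv₀ : v i₀ = fun _ => (Real.sqrt N)⁻¹) (hlam₀ : lam i₀ = 0)
    (hdecay : ∀ i, i ≠ i₀ → Tendsto (fun T => ∏ k ∈ range T, (1 - ε k * lam i)) atTop (nhds 0)) :
    Tendsto (consProd L ε) atTop (nhds ((N : ℝ)⁻¹ • vecMulVec (fun _ => 1) (fun _ => 1))) := by
  have hlimit : ∑ i, (if i = i₀ then (1 : ℝ) else 0) • vecMulVec (v i) (v i) =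
      (N : ℝ)⁻¹ • vecMulVec (fun _ => 1) (fun _ => 1) := by
    simp only [ite_smul, one_smul, zero_smul, sum_ite_eq', mem_univ, if_true, hv₀]
    ext j k
    simp [vecMulVec_apply, ← mul_inv, Real.mul_self_sqrt (Nat.cast_nonneg N)]
  rw [← hlimit]
  refine tendsto_consProd heig horth fun i => ?_
  by_cases hi : i = i₀
  · simp [hi, hlam₀]
  · simpa [hi] using hdecay i hi

end Eigenbasis

lemma prod_eq_normalizedFilter (M : ℕ) (b x : ℝ) :
    ∏ k ∈ range M, (1 - (M + 1) * x / (b * (k + 1))) = normalizedFilter M ((M + 1) * x / b) := by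
  simp only [normalizedFilter, div_div]

lemma mul_div_mem_Icc {b c p q x : ℝ} (hb : 0 < b) (hc : 0 < c)
    (hx : x ∈ Set.Icc (b * p / c) (b * q / c)) : c * x / b ∈ Set.Icc p q := by
  have h₁ := (div_le_iff₀ hc).1 hx.1
  have h₂ := (le_div_iff₀ hc).1 hx.2
  constructor
  · rw [le_div_iff₀ hb]; linarith
  · rw [div_le_iff₀ hb]; linarith

lemma Function.periodic_of_eq_add_mul {ε : ℕ → ℝ} {M : ℕ} (hM : 0 < M) (g : ℕ → ℝ)
    (hε : ∀ j k, k < M → ε (k + j * M) = g k) : Function.Periodic ε M := fun n => by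
  have hmod := Nat.mod_lt n hM
  have h₁ := hε (n / M + 1) (n % M) hmod
  have h₂ := hε (n / M) (n % M) hmod
  rw [add_mul, one_mul, ← add_assoc, Nat.mod_add_div'] at h₁
  rw [Nat.mod_add_div'] at h₂
  rw [h₁, h₂]

theorem stmt_11_general (b : ℝ) (hb : 0 < b) (M : ℕ) (hM : 1 ≤ M)
    (N : ℕ)
    (L : Matrix (Fin N) (Fin N) ℝ)
    (lam : Fin N → ℝ) (v : Fin N → Fin N → ℝ)
    (hlam0 : ∀ i : Fin N, (i : ℕ) = 0 → lam i = 0)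
    (heig : ∀ i, L.mulVec (v i) = lam i • v i)
    (horth : ∀ i j, v i ⬝ᵥ v j = if i = j then 1 else 0)
    (hv0 : ∀ i : Fin N, (i : ℕ) = 0 → v i = fun _ => (Real.sqrt N)⁻¹)
    (hne : (Finset.univ.filter (fun i : Fin N => (i : ℕ) ≠ 0)).Nonempty)
    -- all nonzero eigenvalues lie in (0, b), where b = β̄
    (hspec : ∀ i : Fin N, (i : ℕ) ≠ 0 → lam i ∈ Set.Ioo 0 b)
    -- the M-periodic gain sequence ε(k + jM) = (M+1)/(b(k+1))
    (ε : ℕ → ℝ)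
    (hε : ∀ j k, k < M → ε (k + j * M) = (M + 1) / (b * (k + 1))) :
    -- (a) pointwise bound on the subintervals, and |h| < 1 on (0, b)
    (∀ i ≤ M, ∀ x ∈ Set.Icc (b * i / (M + 1)) (b * (i + 1) / (M + 1)), x ≠ 0 → x ≠ b →
      |∏ k ∈ Finset.range M, (1 - (M + 1) * x / (b * (k + 1)))| ≤
        ((Nat.factorial i : ℝ) * (Nat.factorial (M - i) : ℝ)) / (Nat.factorial M : ℝ)) ∧
    (∀ x ∈ Set.Ioo 0 b,
      |∏ k ∈ Finset.range M, (1 - (M + 1) * x / (b * (k + 1)))| < 1) ∧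
    -- (b) uniform bound 1/M on the middle interval
    (∀ x ∈ Set.Icc (b / (M + 1)) (M * b / (M + 1)),
      |∏ k ∈ Finset.range M, (1 - (M + 1) * x / (b * (k + 1)))| ≤ 1 / M) ∧
    -- asymptotic average consensus
    Tendsto (consProd L ε) atTop
      (nhds ((N : ℝ)⁻¹ • vecMulVec (fun _ => 1) (fun _ => 1))) ∧
    -- rate bound when the nonzero spectrum lies in [b/(M+1), Mb/(M+1)]
    ((∀ i : Fin N, (i : ℕ) ≠ 0 → lam i ∈ Set.Icc (b / (M + 1)) (M * b / (M + 1))) →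
      (Finset.univ.filter (fun i : Fin N => (i : ℕ) ≠ 0)).sup' hne
          (fun i => |∏ k ∈ Finset.range M, (1 - ε k * lam i)|) ≤ 1 / M) := by
  have hM₁ : (0 : ℝ) < M + 1 := by positivity
  have hεk : ∀ k < M, ε k = (M + 1) / (b * (k + 1)) := fun k hk => by simpa using hε 0 k hk
  have hperiod : ∀ x, ∏ k ∈ range M, (1 - ε k * x) = normalizedFilter M ((M + 1) * x / b) :=
    fun x => by
      rw [← prod_eq_normalizedFilter]
      refine prod_congr rfl fun k hk => ?_
      rw [hεk k (mem_range.1 hk)]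
      ring
  have hstrict : ∀ x ∈ Set.Ioo 0 b, |normalizedFilter M ((M + 1) * x / b)| < 1 :=
    fun x hx => abs_normalizedFilter_lt_one hM
      ⟨by have := hx.1; positivity, by rw [div_lt_iff₀ hb]; nlinarith [hx.2]⟩
  have hmiddle : ∀ x ∈ Set.Icc (b / (M + 1)) (M * b / (M + 1)),
      |normalizedFilter M ((M + 1) * x / b)| ≤ 1 / M := fun x hx =>
    abs_normalizedFilter_le_inv hM (mul_div_mem_Icc hb hM₁ (by rwa [mul_one, mul_comm b]))
  have hN : 0 < N := let ⟨i, _⟩ := hne; i.pos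
  refine ⟨fun i hi x hx _ _ => ?_, fun x hx => ?_, fun x hx => ?_, ?_, fun hmid => ?_⟩
  · rw [prod_eq_normalizedFilter]
    exact abs_normalizedFilter_le hi (mul_div_mem_Icc hb hM₁ hx).1 (mul_div_mem_Icc hb hM₁ hx).2
  · exact (prod_eq_normalizedFilter M b x).symm ▸ hstrict x hx
  · exact (prod_eq_normalizedFilter M b x).symm ▸ hmiddle x hx
  · have hper := Function.periodic_of_eq_add_mul hM _ hε
    refine tendsto_consProd_average heig horth (hv0 ⟨0, hN⟩ rfl) (hlam0 ⟨0, hN⟩ rfl) fun i hi => ?_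
    have hi' : (i : ℕ) ≠ 0 := fun h => hi (Fin.ext h)
    refine Function.Periodic.tendsto_prod_range_zero hM (fun k => by simp only [hper k]) ?_
    rw [hperiod]
    exact hstrict _ (hspec i hi')
  · refine sup'_le _ _ fun i hi => ?_
    rw [hperiod]
    exact hmiddle _ (hmid i (mem_filter.1 hi).2)

theorem stmt_11 (b : ℝ) (hb : 0 < b) (M : ℕ) (hM : 1 ≤ M)
    (N : ℕ) (hN : 2 ≤ N)
    (L : Matrix (Fin N) (Fin N) ℝ) (hsymm : L.IsSymm) (hpsd : L.PosSemidef)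
    (lam : Fin N → ℝ) (v : Fin N → Fin N → ℝ)
    (hlam0 : ∀ i : Fin N, (i : ℕ) = 0 → lam i = 0)
    (hlam_pos : ∀ i : Fin N, (i : ℕ) ≠ 0 → 0 < lam i)
    (heig : ∀ i, L.mulVec (v i) = lam i • v i)
    (horth : ∀ i j, v i ⬝ᵥ v j = if i = j then 1 else 0)
    (hv0 : ∀ i : Fin N, (i : ℕ) = 0 → v i = fun _ => (Real.sqrt N)⁻¹)
    (hne : (Finset.univ.filter (fun i : Fin N => (i : ℕ) ≠ 0)).Nonempty)
    -- all nonzero eigenvalues lie in (0, b), where b = β̄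
    (hspec : ∀ i : Fin N, (i : ℕ) ≠ 0 → lam i ∈ Set.Ioo 0 b)
    -- the M-periodic gain sequence ε(k + jM) = (M+1)/(b(k+1))
    (ε : ℕ → ℝ)
    (hε : ∀ j k, k < M → ε (k + j * M) = (M + 1) / (b * (k + 1))) :
    -- (a) pointwise bound on the subintervals, and |h| < 1 on (0, b)
    (∀ i ≤ M, ∀ x ∈ Set.Icc (b * i / (M + 1)) (b * (i + 1) / (M + 1)), x ≠ 0 → x ≠ b →
      |∏ k ∈ Finset.range M, (1 - (M + 1) * x / (b * (k + 1)))| ≤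
        ((Nat.factorial i : ℝ) * (Nat.factorial (M - i) : ℝ)) / (Nat.factorial M : ℝ)) ∧
    (∀ x ∈ Set.Ioo 0 b,
      |∏ k ∈ Finset.range M, (1 - (M + 1) * x / (b * (k + 1)))| < 1) ∧
    -- (b) uniform bound 1/M on the middle interval
    (∀ x ∈ Set.Icc (b / (M + 1)) (M * b / (M + 1)),
      |∏ k ∈ Finset.range M, (1 - (M + 1) * x / (b * (k + 1)))| ≤ 1 / M) ∧
    -- asymptotic average consensus
    Tendsto (consProd L ε) atTop
      (nhds ((N : ℝ)⁻¹ • vecMulVec (fun _ => 1) (fun _ => 1))) ∧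
    -- rate bound when the nonzero spectrum lies in [b/(M+1), Mb/(M+1)]
    ((∀ i : Fin N, (i : ℕ) ≠ 0 → lam i ∈ Set.Icc (b / (M + 1)) (M * b / (M + 1))) →
      (Finset.univ.filter (fun i : Fin N => (i : ℕ) ≠ 0)).sup' hne
          (fun i => |∏ k ∈ Finset.range M, (1 - ε k * lam i)|) ≤ 1 / M) :=
  stmt_11_general b hb M hM N L lam v hlam0 heig horth hv0 hne hspec ε hε
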